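/- Let G be a finite group and H a subgroup of G. If H is not a perfect code of G, then there exists a 2-element x ∈ G \ H such that x² ∈ H, the index |H : H ∩ xHx⁻¹| is odd, and the double coset HxH contains no involution. -/

import Mathlib

open scoped Pointwise

/-- A subgroup `H` of a group `G` is a *perfect code* of `G` if `H` admits an
inverse-closed left transversal in `G`, i.e. there is a set `T ⊆ G` with
`T⁻¹ = T` such that every element of `G` lies in exactly one left coset `tH`, `t ∈ T`. -/
def IsPerfectCode {G : Type*} [Group G] (H : Subgroup G) : Prop :=
  ∃ T : Set G, T⁻¹ = T ∧ ∀ g : G, ∃! t : G, t ∈ T ∧ t⁻¹ * g ∈ H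

namespace PerfectCodeAux

open DoubleCoset Finset

variable {G : Type*} [Group G]

theorem mul_mem_doset {H : Subgroup G} {g b k : G} (hb : b ∈ doubleCoset g (H : Set G) H)
    (hk : k ∈ H) : b * k ∈ doubleCoset g (H : Set G) H := by
  obtain ⟨h1, hh1, h2, hh2, rfl⟩ := mem_doubleCoset.1 hb
  exact mem_doubleCoset.2 ⟨h1, hh1, h2 * k, H.mul_mem hh2 hk, by group⟩

theorem inv_mem_doset_inv {H : Subgroup G} {g b : G} (hb : b ∈ doubleCoset g (H : Set G) H) :
    b⁻¹ ∈ doubleCoset g⁻¹ (H : Set G) H := by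
  obtain ⟨h1, hh1, h2, hh2, rfl⟩ := mem_doubleCoset.1 hb
  exact mem_doubleCoset.2 ⟨h2⁻¹, H.inv_mem hh2, h1⁻¹, H.inv_mem hh1, by group⟩

theorem doset_inv_congr {H : Subgroup G} {g g' : G}
    (h : doubleCoset g (H : Set G) H = doubleCoset g' (H : Set G) H) :
    doubleCoset g⁻¹ (H : Set G) H = doubleCoset g'⁻¹ (H : Set G) H := by
  have hg : g ∈ doubleCoset g' (H : Set G) H := h ▸ mem_doubleCoset_self H H g
  exact doubleCoset_eq_of_mem (inv_mem_doset_inv hg)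

variable [Finite G]

noncomputable def InD (H : Subgroup G) (g : G) : Finset (G ⧸ H) :=
  Set.Finite.toFinset (Set.toFinite {C : G ⧸ H | Quotient.out C ∈ doubleCoset g (H : Set G) H})

theorem mem_InD {H : Subgroup G} {g : G} {C : G ⧸ H} :
    C ∈ InD H g ↔ Quotient.out C ∈ doubleCoset g (H : Set G) H := by
  simp [InD]

theorem mem_InD_mk {H : Subgroup G} {g c : G} :
    (QuotientGroup.mk c : G ⧸ H) ∈ InD H g ↔ c ∈ doubleCoset g (H : Set G) H := by
  obtain ⟨k, hk⟩ := QuotientGroup.mk_out_eq_mul H c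
  rw [mem_InD, hk]
  constructor
  · intro h'
    have := mul_mem_doset h' (H.inv_mem k.2)
    simpa [mul_assoc] using this
  · intro h'
    exact mul_mem_doset h' k.2

theorem InD_congr {H : Subgroup G} {g g' : G}
    (h : doubleCoset g (H : Set G) H = doubleCoset g' (H : Set G) H) : InD H g = InD H g' := by
  ext C; rw [mem_InD, mem_InD, h]

theorem doset_eq_of_mem_InD_both {H : Subgroup G} {g g' : G} {C : G ⧸ H}
    (h1 : C ∈ InD H g) (h2 : C ∈ InD H g') :
    doubleCoset g (H : Set G) H = doubleCoset g' (H : Set G) H :=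
  eq_of_not_disjoint (Set.not_disjoint_iff.2 ⟨Quotient.out C, mem_InD.1 h1, mem_InD.1 h2⟩)

theorem exists_pair {H : Subgroup G} {c c' : G} (h : c' ∈ doubleCoset c⁻¹ (H : Set G) H) :
    ∃ t : G, (QuotientGroup.mk t : G ⧸ H) = QuotientGroup.mk c ∧
      (QuotientGroup.mk t⁻¹ : G ⧸ H) = QuotientGroup.mk c' := by
  obtain ⟨h1, hh1, h2, hh2, rfl⟩ := mem_doubleCoset.1 h
  refine ⟨c * h1⁻¹, ?_, ?_⟩
  · rw [QuotientGroup.eq]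
    have : (c * h1⁻¹)⁻¹ * c = h1 := by group
    rw [this]; exact hh1
  · rw [QuotientGroup.eq]
    have : ((c * h1⁻¹)⁻¹)⁻¹ * (h1 * c⁻¹ * h2) = h2 := by group
    rw [this]; exact hh2

theorem exists_sq_mem {H : Subgroup G} {g : G}
    (hg : doubleCoset g⁻¹ (H : Set G) H = doubleCoset g (H : Set G) H) :
    ∃ y ∈ doubleCoset g (H : Set G) H, y ^ 2 ∈ H := by
  have hginv : g⁻¹ ∈ doubleCoset g (H : Set G) H := hg ▸ mem_doubleCoset_self H H g⁻¹
  obtain ⟨h, hh, k, hk, hEq⟩ := mem_doubleCoset.1 hginv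
  refine ⟨h * g, mem_doubleCoset.2 ⟨h, hh, 1, H.one_mem, by group⟩, ?_⟩
  have e1 : h * g = g⁻¹ * k⁻¹ := by rw [hEq]; group
  have e2 : (h * g) ^ 2 = h * k⁻¹ := by
    calc (h * g) ^ 2 = (h * g) * (h * g) := sq _
      _ = (h * g) * (g⁻¹ * k⁻¹) := by rw [← e1]
      _ = h * k⁻¹ := by group
  rw [e2]; exact H.mul_mem hh (H.inv_mem hk)

theorem two_reduction {H : Subgroup G} {y : G} (hy : y ∉ H) (hy2 : y ^ 2 ∈ H) :
    ∃ x k : G, k ∈ H ∧ x = y * k ∧ (∃ n : ℕ, orderOf x = 2 ^ n) ∧ x ∉ H ∧ x ^ 2 ∈ H := by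
  set n := orderOf y with hn
  have hnpos : 0 < n := orderOf_pos y
  set m := ordCompl[2] n with hm
  have hmdvd : m ∣ n := Nat.ordCompl_dvd n 2
  have hmodd : ¬ 2 ∣ m := Nat.not_dvd_ordCompl Nat.prime_two hnpos.ne'
  obtain ⟨j, hj⟩ : ∃ j, m = 2 * j + 1 := by
    rcases Nat.even_or_odd m with he | ho
    · exact absurd he.two_dvd hmodd
    · obtain ⟨j, hj⟩ := ho; exact ⟨j, hj⟩
  have hk : y ^ (2 * j) ∈ H := by
    rw [pow_mul]; exact pow_mem hy2 j
  refine ⟨y ^ m, y ^ (2 * j), hk, ?_, ?_, ?_, ?_⟩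
  · rw [hj, pow_succ']
  · refine ⟨n.factorization 2, ?_⟩
    rw [orderOf_pow, ← hn, Nat.gcd_eq_right hmdvd, hm]
    exact Nat.div_div_self (Nat.ordProj_dvd n 2) hnpos.ne'
  · intro hx
    apply hy
    have hy' : y = y ^ m * (y ^ (2 * j))⁻¹ := by rw [hj, pow_succ']; group
    rw [hy']; exact H.mul_mem hx (H.inv_mem hk)
  · have : (y ^ m) ^ 2 = (y ^ 2) ^ m := by rw [← pow_mul, ← pow_mul, Nat.mul_comm]
    rw [this]; exact pow_mem hy2 m

theorem mem_inf_conj (H : Subgroup G) (x a : G) :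
    a ∈ H ⊓ H.map (MulAut.conj x).toMonoidHom ↔ a ∈ H ∧ x⁻¹ * a * x ∈ H := by
  rw [Subgroup.mem_inf]
  constructor
  · rintro ⟨h1, h2⟩
    refine ⟨h1, ?_⟩
    obtain ⟨b, hb, rfl⟩ := Subgroup.mem_map.1 h2
    have : x⁻¹ * ((MulAut.conj x).toMonoidHom b) * x = b := by
      simp [MulAut.conj_apply]; group
    rw [this]; exact hb
  · rintro ⟨h1, h2⟩
    refine ⟨h1, Subgroup.mem_map.2 ⟨x⁻¹ * a * x, h2, ?_⟩⟩
    simp [MulAut.conj_apply]; group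

theorem relIndex_eq_card_InD (H : Subgroup G) (x : G) :
    (H ⊓ H.map (MulAut.conj x).toMonoidHom).relIndex H = (InD H x).card := by
  classical
  set K := H ⊓ H.map (MulAut.conj x).toMonoidHom with hK
  let F0 : ↥H → {C : G ⧸ H // C ∈ InD H x} := fun h =>
    ⟨QuotientGroup.mk ((h : G) * x), by
      rw [mem_InD_mk]
      exact mem_doubleCoset.2 ⟨h, h.2, 1, H.one_mem, by rw [mul_one]⟩⟩
  have hresp : ∀ a b : ↥H, QuotientGroup.leftRel (K.subgroupOf H) a b → F0 a = F0 b := by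
    intro a b hab
    rw [QuotientGroup.leftRel_apply] at hab
    have h2 := ((mem_inf_conj H x _).1 ((Subgroup.mem_subgroupOf).1 hab)).2
    apply Subtype.ext
    show QuotientGroup.mk _ = QuotientGroup.mk _
    rw [QuotientGroup.eq]
    have he : ((a : G) * x)⁻¹ * ((b : G) * x) = x⁻¹ * ((a : G)⁻¹ * (b : G)) * x := by group
    rw [he]
    simpa using h2
  let F : (↥H ⧸ K.subgroupOf H) → {C : G ⧸ H // C ∈ InD H x} :=
    fun q => Quotient.liftOn' q F0 hresp
  have hbij : Function.Bijective F := by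
    constructor
    · intro q1 q2
      induction q1 using Quotient.inductionOn'
      induction q2 using Quotient.inductionOn'
      rename_i a b
      intro hF
      apply Quotient.sound'
      rw [QuotientGroup.leftRel_apply, Subgroup.mem_subgroupOf, mem_inf_conj]
      refine ⟨(a⁻¹ * b).2, ?_⟩
      have hq : (QuotientGroup.mk ((a : G) * x) : G ⧸ H) = QuotientGroup.mk ((b : G) * x) :=
        congrArg Subtype.val hF
      rw [QuotientGroup.eq] at hq
      have he : ((a : G) * x)⁻¹ * ((b : G) * x) = x⁻¹ * ((a : G)⁻¹ * (b : G)) * x := by group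
      rw [he] at hq
      simpa using hq
    · rintro ⟨C, hC⟩
      rw [mem_InD] at hC
      obtain ⟨h1, hh1, h2, hh2, hCout⟩ := mem_doubleCoset.1 hC
      refine ⟨Quotient.mk'' ⟨h1, hh1⟩, ?_⟩
      apply Subtype.ext
      show QuotientGroup.mk (h1 * x) = C
      conv_rhs => rw [← QuotientGroup.out_eq' C]
      rw [QuotientGroup.eq, hCout]
      have : (h1 * x)⁻¹ * (h1 * x * h2) = h2 := by group
      rw [this]; exact hh2
  have h1 : K.relIndex H = Nat.card (↥H ⧸ K.subgroupOf H) := rfl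
  rw [h1, Nat.card_congr (Equiv.ofBijective F hbij)]
  rw [Nat.card_eq_finsetCard]

theorem card_InD_inv (H : Subgroup G) (g : G) : (InD H g).card = (InD H g⁻¹).card := by
  rw [← relIndex_eq_card_InD, ← relIndex_eq_card_InD]
  set K1 := H ⊓ H.map (MulAut.conj g).toMonoidHom with hK1
  set K2 := H ⊓ H.map (MulAut.conj g⁻¹).toMonoidHom with hK2
  have ecard : Nat.card K1 = Nat.card K2 := by
    refine Nat.card_congr ⟨fun a => ⟨g⁻¹ * a * g, ?_⟩, fun a => ⟨g * a * g⁻¹, ?_⟩, ?_, ?_⟩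
    · obtain ⟨h1, h2⟩ := (mem_inf_conj H g _).1 a.2
      rw [mem_inf_conj]
      refine ⟨h2, ?_⟩
      have : (g⁻¹)⁻¹ * (g⁻¹ * (a : G) * g) * g⁻¹ = (a : G) := by group
      rw [this]; exact h1
    · obtain ⟨h1, h2⟩ := (mem_inf_conj H g⁻¹ _).1 a.2
      rw [mem_inf_conj]
      refine ⟨?_, ?_⟩
      · simpa using h2
      · have : g⁻¹ * (g * (a : G) * g⁻¹) * g = (a : G) := by group
        rw [this]; exact h1
    · intro a; apply Subtype.ext; show g * (g⁻¹ * (a : G) * g) * g⁻¹ = (a : G); group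
    · intro a; apply Subtype.ext; show g⁻¹ * (g * (a : G) * g⁻¹) * g = (a : G); group
  have c1 : Nat.card (K1.subgroupOf H) = Nat.card K1 :=
    Nat.card_congr (Subgroup.subgroupOfEquivOfLe inf_le_left).toEquiv
  have c2 : Nat.card (K2.subgroupOf H) = Nat.card K2 :=
    Nat.card_congr (Subgroup.subgroupOfEquivOfLe inf_le_left).toEquiv
  have m1 : Nat.card (K1.subgroupOf H) * (K1.subgroupOf H).index = Nat.card H :=
    Subgroup.card_mul_index _
  have m2 : Nat.card (K2.subgroupOf H) * (K2.subgroupOf H).index = Nat.card H :=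
    Subgroup.card_mul_index _
  have hpos : 0 < Nat.card K1 := Nat.card_pos
  show (K1.subgroupOf H).index = (K2.subgroupOf H).index
  apply Nat.eq_of_mul_eq_mul_left hpos
  calc Nat.card K1 * (K1.subgroupOf H).index = Nat.card H := by rw [← c1]; exact m1
    _ = Nat.card K2 * (K2.subgroupOf H).index := by rw [← c2]; exact m2.symm
    _ = Nat.card K1 * (K2.subgroupOf H).index := by rw [ecard]

theorem glue {H : Subgroup G} [DecidableEq (G ⧸ H)] {U : Finset (G ⧸ H)} {C₁ C₂ : G ⧸ H} {t : G}
    (hC₁ : C₁ ∈ U) (hC₂ : C₂ ∈ U) (hne : C₁ ≠ C₂)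
    (ht1 : (QuotientGroup.mk t : G ⧸ H) = C₁) (ht2 : (QuotientGroup.mk t⁻¹ : G ⧸ H) = C₂)
    {T' : Finset G}
    (hcl : ∀ u ∈ T', u⁻¹ ∈ T')
    (hsd : ∀ u ∈ T', (QuotientGroup.mk u : G ⧸ H) ∈ U \ {C₁, C₂})
    (hcp : ∀ C ∈ U \ {C₁, C₂}, ∃ u ∈ T', (QuotientGroup.mk u : G ⧸ H) = C)
    (huq : ∀ u ∈ T', ∀ u' ∈ T',
      (QuotientGroup.mk u : G ⧸ H) = QuotientGroup.mk u' → u = u') :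
    ∃ T : Finset G, (∀ u ∈ T, u⁻¹ ∈ T) ∧ (∀ u ∈ T, (QuotientGroup.mk u : G ⧸ H) ∈ U) ∧
      (∀ C ∈ U, ∃ u ∈ T, (QuotientGroup.mk u : G ⧸ H) = C) ∧
      (∀ u ∈ T, ∀ u' ∈ T, (QuotientGroup.mk u : G ⧸ H) = QuotientGroup.mk u' → u = u') := by
  classical
  refine ⟨insert t (insert t⁻¹ T'), ?_, ?_, ?_, ?_⟩
  · intro u hu
    rcases Finset.mem_insert.1 hu with rfl | hu
    · exact Finset.mem_insert_of_mem (Finset.mem_insert_self _ _)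
    rcases Finset.mem_insert.1 hu with rfl | hu
    · rw [inv_inv]; exact Finset.mem_insert_self _ _
    · exact Finset.mem_insert_of_mem (Finset.mem_insert_of_mem (hcl u hu))
  · intro u hu
    rcases Finset.mem_insert.1 hu with rfl | hu
    · rw [ht1]; exact hC₁
    rcases Finset.mem_insert.1 hu with rfl | hu
    · rw [ht2]; exact hC₂
    · exact (Finset.mem_sdiff.1 (hsd u hu)).1
  · intro C hC
    by_cases h1 : C = C₁
    · exact ⟨t, Finset.mem_insert_self _ _, h1 ▸ ht1⟩
    by_cases h2 : C = C₂
    · exact ⟨t⁻¹, Finset.mem_insert_of_mem (Finset.mem_insert_self _ _), h2 ▸ ht2⟩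
    · obtain ⟨u, hu, hqu⟩ := hcp C (Finset.mem_sdiff.2 ⟨hC, by simp [h1, h2]⟩)
      exact ⟨u, Finset.mem_insert_of_mem (Finset.mem_insert_of_mem hu), hqu⟩
  · intro u hu u' hu' hq
    have key : ∀ v ∈ T', (QuotientGroup.mk v : G ⧸ H) ≠ C₁ ∧
        (QuotientGroup.mk v : G ⧸ H) ≠ C₂ := by
      intro v hv
      have := (Finset.mem_sdiff.1 (hsd v hv)).2
      simp only [Finset.mem_insert, Finset.mem_singleton] at this
      push_neg at this
      exact this
    have hsplit : ∀ v : G, v ∈ insert t (insert t⁻¹ T') → v = t ∨ v = t⁻¹ ∨ v ∈ T' := by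
      intro v hv; simpa [Finset.mem_insert] using hv
    rcases hsplit u hu with rfl | rfl | huT
    · rcases hsplit u' hu' with rfl | rfl | huT'
      · rfl
      · exact absurd (ht1.symm.trans (hq.trans ht2)) hne
      · exact absurd (hq.symm.trans ht1) (key u' huT').1
    · rcases hsplit u' hu' with rfl | rfl | huT'
      · exact absurd ((ht1.symm.trans hq.symm).trans ht2) hne
      · rfl
      · exact absurd (hq.symm.trans ht2) (key u' huT').2
    · rcases hsplit u' hu' with rfl | rfl | huT'
      · exact absurd (hq.trans ht1) (key u huT).1
      · exact absurd (hq.trans ht2) (key u huT).2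
      · exact huq u huT u' huT' hq

theorem card_sdiff_pair_mm {α : Type*} [DecidableEq α] {s : Finset α} {a b : α}
    (hab : a ≠ b) (ha : a ∈ s) (hb : b ∈ s) : (s \ {a, b}).card + 2 = s.card := by
  have h1 : s \ {a, b} = (s.erase a).erase b := by
    ext x
    simp only [Finset.mem_sdiff, Finset.mem_insert, Finset.mem_singleton, Finset.mem_erase]
    tauto
  rw [h1]
  have hb' : b ∈ s.erase a := Finset.mem_erase.2 ⟨fun h => hab h.symm, hb⟩
  have e1 := Finset.card_erase_add_one hb'
  have e2 := Finset.card_erase_add_one ha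
  omega

theorem card_sdiff_pair_m {α : Type*} [DecidableEq α] {s : Finset α} {a b : α}
    (ha : a ∈ s) (hb : b ∉ s) : (s \ {a, b}).card + 1 = s.card := by
  have h1 : s \ {a, b} = s.erase a := by
    ext x
    simp only [Finset.mem_sdiff, Finset.mem_insert, Finset.mem_singleton, Finset.mem_erase]
    constructor
    · rintro ⟨hx, h2⟩; push_neg at h2; exact ⟨h2.1, hx⟩
    · rintro ⟨hxa, hx⟩
      refine ⟨hx, ?_⟩
      rintro (rfl | rfl)
      · exact hxa rfl
      · exact hb hx
  rw [h1]; exact Finset.card_erase_add_one ha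

theorem sdiff_pair_eq {α : Type*} [DecidableEq α] {s : Finset α} {a b : α}
    (ha : a ∉ s) (hb : b ∉ s) : s \ {a, b} = s := by
  ext x
  simp only [Finset.mem_sdiff, Finset.mem_insert, Finset.mem_singleton]
  constructor
  · exact fun h => h.1
  · intro hx
    refine ⟨hx, ?_⟩
    rintro (rfl | rfl)
    · exact ha hx
    · exact hb hx


theorem card_sdiff_pair {α : Type*} [DecidableEq α] {s : Finset α} {a b : α} (hab : a ≠ b) :
    (s \ {a, b}).card + ((if a ∈ s then 1 else 0) + (if b ∈ s then 1 else 0)) = s.card := by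
  by_cases ha : a ∈ s <;> by_cases hb : b ∈ s
  · rw [if_pos ha, if_pos hb]; exact card_sdiff_pair_mm hab ha hb
  · rw [if_pos ha, if_neg hb]; exact card_sdiff_pair_m ha hb
  · rw [if_neg ha, if_pos hb, Finset.pair_comm]
    exact card_sdiff_pair_m hb ha
  · rw [if_neg ha, if_neg hb, sdiff_pair_eq ha hb]; omega

theorem main_induction {H : Subgroup G} [DecidableEq (G ⧸ H)] :
    ∀ (n : ℕ) (U : Finset (G ⧸ H)), U.card ≤ n →
    (∀ g : G, (U ∩ InD H g).card = (U ∩ InD H g⁻¹).card) →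
    (∀ g : G, doubleCoset g⁻¹ (H : Set G) H = doubleCoset g (H : Set G) H →
      Odd ((U ∩ InD H g).card) →
      ∃ C ∈ U ∩ InD H g, ∃ s : G, (QuotientGroup.mk s : G ⧸ H) = C ∧ s ^ 2 = 1) →
    ∃ T : Finset G, (∀ u ∈ T, u⁻¹ ∈ T) ∧ (∀ u ∈ T, (QuotientGroup.mk u : G ⧸ H) ∈ U) ∧
      (∀ C ∈ U, ∃ u ∈ T, (QuotientGroup.mk u : G ⧸ H) = C) ∧
      (∀ u ∈ T, ∀ u' ∈ T, (QuotientGroup.mk u : G ⧸ H) = QuotientGroup.mk u' → u = u') := by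
  classical
  intro n
  induction n with
  | zero =>
    intro U hU _ _
    have : U = ∅ := Finset.card_eq_zero.1 (Nat.le_zero.1 hU)
    subst this
    exact ⟨∅, by simp, by simp, by simp, by simp⟩
  | succ n ih =>
    intro U hU hcount hspec
    rcases U.eq_empty_or_nonempty with rfl | ⟨C, hC⟩
    · exact ⟨∅, by simp, by simp, by simp, by simp⟩
    have hq_c : (QuotientGroup.mk (Quotient.out C) : G ⧸ H) = C := QuotientGroup.out_eq' C
    set c := Quotient.out C with hc
    have hCc : C ∈ InD H c := mem_InD.2 (mem_doubleCoset_self H H c)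
    have hCiff : ∀ g : G, C ∈ InD H g ↔
        doubleCoset g (H : Set G) H = doubleCoset c (H : Set G) H := fun g =>
      ⟨fun h' => doset_eq_of_mem_InD_both h' hCc, fun h' => InD_congr h' ▸ hCc⟩
    by_cases hself : doubleCoset c⁻¹ (H : Set G) H = doubleCoset c (H : Set G) H
    · -- self-paired double coset
      set S := U ∩ InD H c with hS
      have hCS : C ∈ S := Finset.mem_inter.2 ⟨hC, hCc⟩
      by_cases hone : S.card = 1
      · obtain ⟨C₀, hC₀, s, hs1, hs2⟩ := hspec c hself (by rw [← hS, hone]; exact odd_one)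
        rw [← hS] at hC₀
        have hC₀C : C₀ = C := Finset.card_le_one.1 (le_of_eq hone) _ hC₀ _ hCS
        have hss : s * s = 1 := by rw [← sq]; exact hs2
        have hsinv : s⁻¹ = s := inv_eq_of_mul_eq_one_right hss
        have hsq : (QuotientGroup.mk s : G ⧸ H) = C := hC₀C ▸ hs1
        have hCnot : ∀ g : G, doubleCoset g (H : Set G) H ≠ doubleCoset c (H : Set G) H →
            C ∉ InD H g ∧ C ∉ InD H g⁻¹ := by
          intro g hg
          constructor
          · intro hmem; exact hg ((hCiff g).1 hmem)
          · intro hmem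
            have h1 := (hCiff g⁻¹).1 hmem
            have h2 := doset_inv_congr h1
            rw [inv_inv] at h2
            exact hg (h2.trans hself)
        have herase : ∀ (W : Finset (G ⧸ H)), C ∉ W → U.erase C ∩ W = U ∩ W := by
          intro W hW
          ext x
          simp only [Finset.mem_inter, Finset.mem_erase]
          constructor
          · rintro ⟨⟨_, h1⟩, h2⟩; exact ⟨h1, h2⟩
          · rintro ⟨h1, h2⟩
            refine ⟨⟨?_, h1⟩, h2⟩
            rintro rfl; exact hW h2
        have hcount' : ∀ g : G,
            (U.erase C ∩ InD H g).card = (U.erase C ∩ InD H g⁻¹).card := by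
          intro g
          by_cases hg : doubleCoset g (H : Set G) H = doubleCoset c (H : Set G) H
          · have e1 : InD H g = InD H c := InD_congr hg
            have e2 : InD H g⁻¹ = InD H c := InD_congr ((doset_inv_congr hg).trans hself)
            rw [e1, e2]
          · obtain ⟨n1, n2⟩ := hCnot g hg
            rw [herase _ n1, herase _ n2]
            exact hcount g
        have hspec' : ∀ g : G, doubleCoset g⁻¹ (H : Set G) H = doubleCoset g (H : Set G) H →
            Odd ((U.erase C ∩ InD H g).card) →
            ∃ C' ∈ U.erase C ∩ InD H g, ∃ s' : G,
              (QuotientGroup.mk s' : G ⧸ H) = C' ∧ s' ^ 2 = 1 := by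
          intro g hgself hodd
          by_cases hg : doubleCoset g (H : Set G) H = doubleCoset c (H : Set G) H
          · exfalso
            have e1 : InD H g = InD H c := InD_congr hg
            rw [e1] at hodd
            have hset : U.erase C ∩ InD H c = S.erase C := by
              ext x
              simp only [hS, Finset.mem_inter, Finset.mem_erase]
              tauto
            rw [hset] at hodd
            have hS1 : S = {C} := by
              obtain ⟨a, ha⟩ := Finset.card_eq_one.1 hone
              rw [ha] at hCS
              rw [Finset.mem_singleton] at hCS
              rw [ha, hCS]
            rw [hS1, Finset.erase_singleton, Finset.card_empty, Nat.odd_iff] at hodd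
            omega
          · obtain ⟨n1, _⟩ := hCnot g hg
            rw [herase _ n1] at hodd ⊢
            obtain ⟨C', hC', hs'⟩ := hspec g hgself hodd
            exact ⟨C', hC', hs'⟩
        obtain ⟨T', hcl', hsd', hcp', huq'⟩ := ih (U.erase C)
          (by have := Finset.card_erase_add_one hC; omega) hcount' hspec'
        refine ⟨insert s T', ?_, ?_, ?_, ?_⟩
        · intro u hu
          rcases Finset.mem_insert.1 hu with rfl | hu
          · rw [hsinv]; exact Finset.mem_insert_self _ _
          · exact Finset.mem_insert_of_mem (hcl' u hu)
        · intro u hu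
          rcases Finset.mem_insert.1 hu with rfl | hu
          · rw [hsq]; exact hC
          · exact Finset.mem_of_mem_erase (hsd' u hu)
        · intro C'' hC''
          by_cases hcc : C'' = C
          · exact ⟨s, Finset.mem_insert_self _ _, hcc ▸ hsq⟩
          · obtain ⟨u, hu, hqu⟩ := hcp' C'' (Finset.mem_erase.2 ⟨hcc, hC''⟩)
            exact ⟨u, Finset.mem_insert_of_mem hu, hqu⟩
        · intro u hu u' hu' hq
          have hkey : ∀ v ∈ T', (QuotientGroup.mk v : G ⧸ H) ≠ C := by
            intro v hv
            exact (Finset.mem_erase.1 (hsd' v hv)).1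
          rcases Finset.mem_insert.1 hu with rfl | huT
          · rcases Finset.mem_insert.1 hu' with rfl | huT'
            · rfl
            · exact absurd (hq.symm.trans hsq) (hkey u' huT')
          · rcases Finset.mem_insert.1 hu' with rfl | huT'
            · exact absurd (hq.trans hsq) (hkey u huT)
            · exact huq' u huT u' huT' hq
      · -- at least two cosets remain in this double coset
        have h2le : 2 ≤ S.card := by
          have hpos : 0 < S.card := Finset.card_pos.2 ⟨C, hCS⟩
          omega
        have hpick : ∃ C₁ ∈ S, ∃ C₂ ∈ S, C₁ ≠ C₂ ∧
            (Odd (S.card - 2) → ∃ C₀ ∈ S, C₀ ≠ C₁ ∧ C₀ ≠ C₂ ∧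
              ∃ s : G, (QuotientGroup.mk s : G ⧸ H) = C₀ ∧ s ^ 2 = 1) := by
          by_cases hodd : Odd S.card
          · obtain ⟨C₀, hC₀, s, hs1, hs2⟩ := hspec c hself (by rw [← hS]; exact hodd)
            rw [← hS] at hC₀
            have h3 : 3 ≤ S.card := by
              rw [Nat.odd_iff] at hodd; omega
            have h1lt : 1 < (S.erase C₀).card := by
              have := Finset.card_erase_add_one hC₀; omega
            obtain ⟨C₁, hC₁e, C₂, hC₂e, h12⟩ := Finset.one_lt_card.1 h1lt
            exact ⟨C₁, (Finset.mem_erase.1 hC₁e).2, C₂, (Finset.mem_erase.1 hC₂e).2, h12,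
              fun _ => ⟨C₀, hC₀, Ne.symm (Finset.mem_erase.1 hC₁e).1,
                Ne.symm (Finset.mem_erase.1 hC₂e).1, s, hs1, hs2⟩⟩
          · obtain ⟨C₂', hC₂', hne'⟩ := Finset.exists_mem_ne (s := S) (by omega) C
            refine ⟨C, hCS, C₂', hC₂', Ne.symm hne', fun hodd2 => absurd ?_ hodd⟩
            rw [Nat.odd_iff] at hodd2 ⊢
            omega
        obtain ⟨C₁, hC₁S, C₂, hC₂S, h12, hkeep⟩ := hpick
        have hC₁U : C₁ ∈ U := (Finset.mem_inter.1 hC₁S).1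
        have hC₂U : C₂ ∈ U := (Finset.mem_inter.1 hC₂S).1
        have hC₁D : C₁ ∈ InD H c := (Finset.mem_inter.1 hC₁S).2
        have hC₂D : C₂ ∈ InD H c := (Finset.mem_inter.1 hC₂S).2
        have hc₂d : Quotient.out C₂ ∈ doubleCoset (Quotient.out C₁)⁻¹ (H : Set G) H := by
          have h1 : Quotient.out C₁ ∈ doubleCoset c (H : Set G) H := mem_InD.1 hC₁D
          have h2 : Quotient.out C₂ ∈ doubleCoset c (H : Set G) H := mem_InD.1 hC₂D
          have e1 := doset_inv_congr (doubleCoset_eq_of_mem h1)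
          rw [e1, hself]
          exact h2
        obtain ⟨t, ht1, ht2⟩ := exists_pair hc₂d
        rw [QuotientGroup.out_eq'] at ht1 ht2
        have hnot : ∀ g : G, doubleCoset g (H : Set G) H ≠ doubleCoset c (H : Set G) H →
            C₁ ∉ InD H g ∧ C₂ ∉ InD H g ∧ C₁ ∉ InD H g⁻¹ ∧ C₂ ∉ InD H g⁻¹ := by
          intro g hg
          have key : ∀ C' : G ⧸ H, C' ∈ InD H c → C' ∉ InD H g := by
            intro C' h1 h2
            exact hg (doset_eq_of_mem_InD_both h2 h1)
          have key' : ∀ C' : G ⧸ H, C' ∈ InD H c → C' ∉ InD H g⁻¹ := by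
            intro C' h1 h2
            have e1 := doset_eq_of_mem_InD_both h2 h1
            have e2 := doset_inv_congr e1
            rw [inv_inv] at e2
            exact hg (e2.trans hself)
          exact ⟨key _ hC₁D, key _ hC₂D, key' _ hC₁D, key' _ hC₂D⟩
        have hunch : ∀ (W : Finset (G ⧸ H)), C₁ ∉ W → C₂ ∉ W →
            (U \ {C₁, C₂}) ∩ W = U ∩ W := by
          intro W h1 h2
          ext x
          simp only [Finset.mem_inter, Finset.mem_sdiff, Finset.mem_insert,
            Finset.mem_singleton]
          constructor
          · rintro ⟨⟨hx, _⟩, hw⟩; exact ⟨hx, hw⟩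
          · rintro ⟨hx, hw⟩
            refine ⟨⟨hx, ?_⟩, hw⟩
            rintro (rfl | rfl)
            exacts [h1 hw, h2 hw]
        have hU' : (U \ {C₁, C₂}).card ≤ n := by
          have hsub : U \ {C₁, C₂} ⊆ U.erase C₁ := by
            intro x hx
            rw [Finset.mem_sdiff] at hx
            rw [Finset.mem_erase]
            refine ⟨?_, hx.1⟩
            intro hh; exact hx.2 (by rw [hh]; exact Finset.mem_insert_self _ _)
          have h1 := Finset.card_le_card hsub
          have h2 := Finset.card_erase_add_one hC₁U
          omega
        have hcount' : ∀ g : G,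
            ((U \ {C₁, C₂}) ∩ InD H g).card = ((U \ {C₁, C₂}) ∩ InD H g⁻¹).card := by
          intro g
          by_cases hg : doubleCoset g (H : Set G) H = doubleCoset c (H : Set G) H
          · have e1 : InD H g = InD H c := InD_congr hg
            have e2 : InD H g⁻¹ = InD H c := InD_congr ((doset_inv_congr hg).trans hself)
            rw [e1, e2]
          · obtain ⟨n1, n2, n3, n4⟩ := hnot g hg
            rw [hunch _ n1 n2, hunch _ n3 n4]
            exact hcount g
        have hspec' : ∀ g : G, doubleCoset g⁻¹ (H : Set G) H = doubleCoset g (H : Set G) H →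
            Odd (((U \ {C₁, C₂}) ∩ InD H g).card) →
            ∃ C' ∈ (U \ {C₁, C₂}) ∩ InD H g, ∃ s' : G,
              (QuotientGroup.mk s' : G ⧸ H) = C' ∧ s' ^ 2 = 1 := by
          intro g hgself hodd
          by_cases hg : doubleCoset g (H : Set G) H = doubleCoset c (H : Set G) H
          · have e1 : InD H g = InD H c := InD_congr hg
            rw [e1] at hodd ⊢
            have hset : (U \ {C₁, C₂}) ∩ InD H c = S \ {C₁, C₂} := by
              ext x
              simp only [hS, Finset.mem_inter, Finset.mem_sdiff, Finset.mem_insert,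
                Finset.mem_singleton]
              tauto
            rw [hset] at hodd ⊢
            have hcard : (S \ {C₁, C₂}).card = S.card - 2 := by
              have := card_sdiff_pair_mm h12 hC₁S hC₂S
              omega
            rw [hcard] at hodd
            obtain ⟨C₀, hC₀S, hn1, hn2, s, hs1, hs2⟩ := hkeep hodd
            refine ⟨C₀, ?_, s, hs1, hs2⟩
            rw [Finset.mem_sdiff]
            refine ⟨hC₀S, ?_⟩
            simp only [Finset.mem_insert, Finset.mem_singleton]
            rintro (rfl | rfl)
            exacts [hn1 rfl, hn2 rfl]
          · obtain ⟨n1, n2, _, _⟩ := hnot g hg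
            rw [hunch _ n1 n2] at hodd ⊢
            obtain ⟨C', hC', hs'⟩ := hspec g hgself hodd
            exact ⟨C', hC', hs'⟩
        obtain ⟨T', hcl', hsd', hcp', huq'⟩ := ih (U \ {C₁, C₂}) hU' hcount' hspec'
        exact glue hC₁U hC₂U h12 ht1 ht2 hcl' hsd' hcp' huq'
    · -- non-self-paired double coset
      have hpos : 0 < (U ∩ InD H c⁻¹).card := by
        rw [← hcount c]
        exact Finset.card_pos.2 ⟨C, Finset.mem_inter.2 ⟨hC, hCc⟩⟩
      obtain ⟨C₂, hC₂⟩ := Finset.card_pos.1 hpos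
      have hC₂U : C₂ ∈ U := (Finset.mem_inter.1 hC₂).1
      have hC₂D : C₂ ∈ InD H c⁻¹ := (Finset.mem_inter.1 hC₂).2
      have hC₂iff : ∀ g : G, C₂ ∈ InD H g ↔
          doubleCoset g (H : Set G) H = doubleCoset c⁻¹ (H : Set G) H := fun g =>
        ⟨fun h' => doset_eq_of_mem_InD_both h' hC₂D, fun h' => InD_congr h' ▸ hC₂D⟩
      have hne : C ≠ C₂ := by
        rintro rfl
        exact hself (doset_eq_of_mem_InD_both hC₂D hCc)
      obtain ⟨t, ht1, ht2⟩ := exists_pair (mem_InD.1 hC₂D)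
      rw [hq_c] at ht1
      rw [QuotientGroup.out_eq'] at ht2
      have d1 : C ∈ InD H c ∧ True := ⟨hCc, trivial⟩
      have dd1 : ∀ g : G, (C ∈ InD H g ↔ C₂ ∈ InD H g⁻¹) := by
        intro g
        rw [hCiff, hC₂iff]
        constructor
        · intro h'; exact doset_inv_congr h'
        · intro h'
          have h2 := doset_inv_congr h'
          rwa [inv_inv, inv_inv] at h2
      have dd2 : ∀ g : G, (C₂ ∈ InD H g ↔ C ∈ InD H g⁻¹) := by
        intro g
        rw [hCiff, hC₂iff]
        constructor
        · intro h'
          have h2 := doset_inv_congr h'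
          rwa [inv_inv] at h2
        · intro h'
          have h2 := doset_inv_congr h'
          rwa [inv_inv] at h2
      have hsdinter : ∀ (W : Finset (G ⧸ H)),
          (U \ {C, C₂}) ∩ W = (U ∩ W) \ {C, C₂} := by
        intro W
        ext x
        simp only [Finset.mem_inter, Finset.mem_sdiff]
        tauto
      have hU' : (U \ {C, C₂}).card ≤ n := by
        have hsub : U \ {C, C₂} ⊆ U.erase C := by
          intro x hx
          rw [Finset.mem_sdiff] at hx
          rw [Finset.mem_erase]
          refine ⟨?_, hx.1⟩
          intro hh; exact hx.2 (by rw [hh]; exact Finset.mem_insert_self _ _)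
        have h1 := Finset.card_le_card hsub
        have h2 := Finset.card_erase_add_one hC
        omega
      have hcount' : ∀ g : G,
          ((U \ {C, C₂}) ∩ InD H g).card = ((U \ {C, C₂}) ∩ InD H g⁻¹).card := by
        intro g
        rw [hsdinter, hsdinter]
        have e1 := card_sdiff_pair (s := U ∩ InD H g) (a := C) (b := C₂) hne
        have e2 := card_sdiff_pair (s := U ∩ InD H g⁻¹) (a := C) (b := C₂) hne
        have e3 : (if C ∈ U ∩ InD H g then 1 else 0) =
            (if C₂ ∈ U ∩ InD H g⁻¹ then 1 else 0) := by
          refine if_congr ?_ rfl rfl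
          simp only [Finset.mem_inter]
          rw [dd1 g]
          simp [hC, hC₂U]
        have e4 : (if C₂ ∈ U ∩ InD H g then 1 else 0) =
            (if C ∈ U ∩ InD H g⁻¹ then 1 else 0) := by
          refine if_congr ?_ rfl rfl
          simp only [Finset.mem_inter]
          rw [dd2 g]
          simp [hC, hC₂U]
        have base := hcount g
        omega
      have hspec' : ∀ g : G, doubleCoset g⁻¹ (H : Set G) H = doubleCoset g (H : Set G) H →
          Odd (((U \ {C, C₂}) ∩ InD H g).card) →
          ∃ C' ∈ (U \ {C, C₂}) ∩ InD H g, ∃ s' : G,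
            (QuotientGroup.mk s' : G ⧸ H) = C' ∧ s' ^ 2 = 1 := by
        intro g hgself hodd
        by_cases hg : doubleCoset g (H : Set G) H = doubleCoset c (H : Set G) H
        · exfalso
          apply hself
          have e1 : doubleCoset c⁻¹ (H : Set G) H = doubleCoset g⁻¹ (H : Set G) H :=
            (doset_inv_congr hg).symm
          rw [e1, hgself]; exact hg
        by_cases hg2 : doubleCoset g (H : Set G) H = doubleCoset c⁻¹ (H : Set G) H
        · exfalso
          apply hself
          have e1 : doubleCoset g⁻¹ (H : Set G) H = doubleCoset c (H : Set G) H := by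
            have h2 := doset_inv_congr hg2
            rwa [inv_inv] at h2
          exact hg2.symm.trans (hgself.symm.trans e1)
        · have n1 : C ∉ InD H g := fun hmem => hg ((hCiff g).1 hmem)
          have n2 : C₂ ∉ InD H g := fun hmem => hg2 ((hC₂iff g).1 hmem)
          have hun : (U \ {C, C₂}) ∩ InD H g = U ∩ InD H g := by
            ext x
            simp only [Finset.mem_inter, Finset.mem_sdiff, Finset.mem_insert,
              Finset.mem_singleton]
            constructor
            · rintro ⟨⟨hx, _⟩, hw⟩; exact ⟨hx, hw⟩
            · rintro ⟨hx, hw⟩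
              refine ⟨⟨hx, ?_⟩, hw⟩
              rintro (rfl | rfl)
              exacts [n1 hw, n2 hw]
          rw [hun] at hodd ⊢
          obtain ⟨C', hC', hs'⟩ := hspec g hgself hodd
          exact ⟨C', hC', hs'⟩
      obtain ⟨T', hcl', hsd', hcp', huq'⟩ := ih (U \ {C, C₂}) hU' hcount' hspec'
      exact glue hC hC₂U hne ht1 ht2 hcl' hsd' hcp' huq'

end PerfectCodeAux

open PerfectCodeAux DoubleCoset in
theorem exists_two_element_of_not_perfectCode {G : Type*} [Group G] [Finite G]
    (H : Subgroup G) (h : ¬ IsPerfectCode H) :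
    ∃ x : G, (∃ n : ℕ, orderOf x = 2 ^ n) ∧ x ∉ H ∧ x ^ 2 ∈ H ∧
      Odd ((H ⊓ H.map (MulAut.conj x).toMonoidHom).relIndex H) ∧
      ∀ g ∈ ((H : Set G) * ({x} : Set G) * (H : Set G) : Set G), orderOf g ≠ 2 := by
  classical
  by_contra hcon
  push_neg at hcon
  apply h
  letI : Fintype (G ⧸ H) := Fintype.ofFinite _
  have hcount : ∀ g : G,
      ((Finset.univ ∩ InD H g).card = (Finset.univ ∩ InD H g⁻¹).card) := by
    intro g
    rw [Finset.univ_inter, Finset.univ_inter]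
    exact card_InD_inv H g
  have hspec : ∀ g : G, doubleCoset g⁻¹ (H : Set G) H = doubleCoset g (H : Set G) H →
      Odd ((Finset.univ ∩ InD H g).card) →
      ∃ C ∈ Finset.univ ∩ InD H g, ∃ s : G,
        (QuotientGroup.mk s : G ⧸ H) = C ∧ s ^ 2 = 1 := by
    intro g hself hodd
    rw [Finset.univ_inter] at hodd
    obtain ⟨y, hyD, hy2⟩ := exists_sq_mem hself
    by_cases hyH : y ∈ H
    · refine ⟨QuotientGroup.mk 1, ?_, 1, rfl, one_pow 2⟩
      rw [Finset.mem_inter]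
      refine ⟨Finset.mem_univ _, ?_⟩
      rw [mem_InD_mk, ← doubleCoset_eq_of_mem hyD]
      exact mem_doubleCoset.2 ⟨1, H.one_mem, y⁻¹, H.inv_mem hyH, by group⟩
    · obtain ⟨x, k, hkH, hxyk, hx2elt, hxH, hx2⟩ := two_reduction hyH hy2
      have hxD : x ∈ doubleCoset g (H : Set G) H := by
        rw [hxyk]; exact mul_mem_doset hyD hkH
      have hdx : doubleCoset x (H : Set G) H = doubleCoset g (H : Set G) H := doubleCoset_eq_of_mem hxD
      have hodd' : Odd ((H ⊓ H.map (MulAut.conj x).toMonoidHom).relIndex H) := by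
        rw [relIndex_eq_card_InD, InD_congr hdx]
        exact hodd
      obtain ⟨s, hsD, hso⟩ := hcon x hx2elt hxH hx2 hodd'
      have hs2 : s ^ 2 = 1 := by rw [← hso]; exact pow_orderOf_eq_one s
      refine ⟨QuotientGroup.mk s, ?_, s, rfl, hs2⟩
      rw [Finset.mem_inter]
      refine ⟨Finset.mem_univ _, ?_⟩
      rw [mem_InD_mk, ← hdx]
      exact hsD
  obtain ⟨T, hcl, _, hcp, huq⟩ :=
    main_induction Finset.univ.card Finset.univ le_rfl hcount hspec
  refine ⟨(T : Set G), ?_, ?_⟩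
  · ext a
    rw [Set.mem_inv]
    simp only [Finset.mem_coe]
    constructor
    · intro ha
      have h2 := hcl a⁻¹ ha
      rwa [inv_inv] at h2
    · intro ha
      exact hcl a ha
  · intro g
    obtain ⟨t, htT, htq⟩ := hcp (QuotientGroup.mk g) (Finset.mem_univ _)
    refine ⟨t, ⟨htT, QuotientGroup.eq.1 htq⟩, ?_⟩
    rintro t' ⟨ht'T, ht'H⟩
    exact huq t' ht'T t htT ((QuotientGroup.eq.2 ht'H).trans htq.symm)
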